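/- Let A be an almost disjoint family on ω of size less than 𝔭 and let (X_n) be infinite subsets of ω such that for every A ∈ I(A) the set {n : X_n ⊆* A} is finite. Then there is B almost disjoint from every member of A such that B ∩ X_n ≠ ∅ for every n. -/

import Mathlib

def IsADFamily (𝒜 : Set (Set ℕ)) : Prop :=
  𝒜.Infinite ∧ (∀ A ∈ 𝒜, A.Infinite) ∧
  ∀ A ∈ 𝒜, ∀ B ∈ 𝒜, A ≠ B → (A ∩ B).Finite

/-- The ideal generated by the family `𝒜` together with the finite sets. -/
def idealOf (𝒜 : Set (Set ℕ)) : Set (Set ℕ) :=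
  {B | ∃ F : Set (Set ℕ), F ⊆ 𝒜 ∧ F.Finite ∧ (B \ ⋃₀ F).Finite}

/-- The pseudo-intersection number 𝔭: the least cardinality of a family of
subsets of ω with the strong finite intersection property but with no
infinite pseudo-intersection. -/
noncomputable def pNumber : Cardinal :=
  sInf {c : Cardinal | ∃ F : Set (Set ℕ), Cardinal.mk ↥F = c ∧
    (∀ G : Set (Set ℕ), G ⊆ F → G.Finite → G.Nonempty → (⋂₀ G).Infinite) ∧
    ¬ ∃ X : Set ℕ, X.Infinite ∧ ∀ A ∈ F, (X \ A).Finite}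


/-!
Each `X i` in `I(𝒜)` is almost covered by the finitely many members of `𝒜` that it meets in an
infinite set, and by hypothesis a finite subfamily almost covers only finitely many `X i`. This
lets one rank `𝒜` by `m : Set ℕ → ℕ` so that such an `X i` meets some `A` with `i < m A` in an
infinite set; by almost disjointness, `X i` is then never covered by finitely many members of `𝒜`
of rank `≤ i`. Hence the finite selectors `l` of `(X n)` with `l i ∉ A` for `i ≥ m A` form a
σ-centred family of size `|𝒜| < 𝔭`. A pseudo-intersection of it yields, diagonally, a selector
`b` of `(X n)` such that `b i ∈ A` for only finitely many `i`, for every `A ∈ 𝒜`; take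
`B = range b`.
-/

open Set

section AlmostDisjoint

variable {α : Type*} {𝒜 F : Set (Set α)}

lemma inter_finite_of_diff_sUnion_finite (h𝒜 : 𝒜.Pairwise fun A B => (A ∩ B).Finite)
    (hF𝒜 : F ⊆ 𝒜) (hF : F.Finite) {A Y : Set α} (hA : A ∈ 𝒜) (hAF : A ∉ F)
    (hY : (Y \ ⋃₀ F).Finite) : (A ∩ Y).Finite := by
  refine (hY.union (hF.biUnion fun B hB => h𝒜 hA (hF𝒜 hB) ?_)).subset ?_
  · rintro rfl
    exact hAF hB
  · rintro x ⟨hxA, hxY⟩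
    by_cases hx : x ∈ ⋃₀ F
    · obtain ⟨B, hB, hxB⟩ := hx
      exact Or.inr (mem_biUnion hB ⟨hxA, hxB⟩)
    · exact Or.inl ⟨hxY, hx⟩

def infinitelyMeeting (𝒜 : Set (Set α)) (Y : Set α) : Set (Set α) :=
  {A ∈ 𝒜 | (A ∩ Y).Infinite}

lemma infinitelyMeeting_subset (h𝒜 : 𝒜.Pairwise fun A B => (A ∩ B).Finite)
    (hF𝒜 : F ⊆ 𝒜) (hF : F.Finite) {Y : Set α} (hY : (Y \ ⋃₀ F).Finite) :
    infinitelyMeeting 𝒜 Y ⊆ F := fun A ⟨hA, hAY⟩ => by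
  by_contra hAF
  exact hAY (inter_finite_of_diff_sUnion_finite h𝒜 hF𝒜 hF hA hAF hY)

lemma diff_sUnion_infinitelyMeeting_finite (hF𝒜 : F ⊆ 𝒜) (hF : F.Finite) {Y : Set α}
    (hY : (Y \ ⋃₀ F).Finite) : (Y \ ⋃₀ infinitelyMeeting 𝒜 Y).Finite := by
  refine (hY.union ((hF.sdiff (t := infinitelyMeeting 𝒜 Y)).biUnion
    (t := fun B => B ∩ Y) fun B hB => ?_)).subset ?_
  · exact not_infinite.1 fun h => hB.2 ⟨hF𝒜 hB.1, h⟩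
  · rintro x ⟨hxY, hx⟩
    by_cases hxF : x ∈ ⋃₀ F
    · obtain ⟨B, hB, hxB⟩ := hxF
      exact Or.inr (mem_biUnion (x := B) ⟨hB, fun hBR => hx ⟨B, hBR, hxB⟩⟩ ⟨hxB, hxY⟩)
    · exact Or.inl ⟨hxY, hxF⟩

end AlmostDisjoint

/- Rank `a` by its position in an enumeration of the countable set `⋃ i ∈ T, R i`: the top-ranked
member `a` of `R i` has all of `R i` below it, and only finitely many `i` have that property. -/
theorem exists_mem_lt_of_finite_subset {α : Type*} {T : Set ℕ} {R : ℕ → Set α}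
    (hR : ∀ i ∈ T, (R i).Finite) (hRne : ∀ i ∈ T, (R i).Nonempty)
    (hcov : ∀ F : Set α, F.Finite → {i ∈ T | R i ⊆ F}.Finite) :
    ∃ m : α → ℕ, ∀ i ∈ T, ∃ a ∈ R i, i < m a := by
  obtain ⟨e, he⟩ := countable_iff_exists_injOn.1
    (T.to_countable.biUnion fun i hi => (hR i hi).countable)
  set below : α → Set α := fun a => {b ∈ ⋃ i ∈ T, R i | e b ≤ e a}
  have hbelow : ∀ a, (below a).Finite := fun a =>
    ((finite_Iic (e a)).subset (image_subset_iff.2 fun _ hb => hb.2)).of_finite_image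
      (he.mono (sep_subset _ _))
  choose N hN using fun a => (hcov (below a) (hbelow a)).bddAbove
  refine ⟨fun a => N a + 1, fun i hi => ?_⟩
  obtain ⟨a, ha, hmax⟩ := exists_max_image (R i) e (hR i hi) (hRne i hi)
  have hsub : R i ⊆ below a := fun b hb => ⟨mem_biUnion hi hb, hmax b hb⟩
  exact ⟨a, ha, Nat.lt_succ_of_le (hN a ⟨hi, hsub⟩)⟩

section Rank

variable {𝒜 : Set (Set ℕ)} {X : ℕ → Set ℕ}

lemma sUnion_mem_idealOf {F : Set (Set ℕ)} (hF𝒜 : F ⊆ 𝒜) (hF : F.Finite) :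
    ⋃₀ F ∈ idealOf 𝒜 :=
  ⟨F, hF𝒜, hF, by simp⟩

theorem exists_rank (h𝒜 : 𝒜.Pairwise fun A B => (A ∩ B).Finite) (hXinf : ∀ n, (X n).Infinite)
    (hfin : ∀ A ∈ idealOf 𝒜, {n : ℕ | (X n \ A).Finite}.Finite) :
    ∃ m : Set ℕ → ℕ, ∀ i, X i ∈ idealOf 𝒜 → ∃ A ∈ infinitelyMeeting 𝒜 (X i), i < m A := by
  refine exists_mem_lt_of_finite_subset (T := {i | X i ∈ idealOf 𝒜}) ?_ ?_ ?_
  · rintro i ⟨F, hF𝒜, hF, hXF⟩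
    exact hF.subset (infinitelyMeeting_subset h𝒜 hF𝒜 hF hXF)
  · rintro i ⟨F, hF𝒜, hF, hXF⟩
    by_contra hR
    have := diff_sUnion_infinitelyMeeting_finite hF𝒜 hF hXF
    rw [not_nonempty_iff_eq_empty.1 hR, sUnion_empty, sdiff_empty] at this
    exact hXinf i this
  · intro F hF
    refine (hfin _ (sUnion_mem_idealOf inter_subset_right (hF.inter_of_left 𝒜))).subset ?_
    rintro i ⟨⟨G, hG𝒜, hG, hXG⟩, hRF⟩
    exact (diff_sUnion_infinitelyMeeting_finite hG𝒜 hG hXG).subset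
      (sdiff_subset_sdiff_right (sUnion_mono (subset_inter hRF (sep_subset _ _))))

lemma diff_sUnion_nonempty_of_rank (h𝒜 : 𝒜.Pairwise fun A B => (A ∩ B).Finite)
    {m : Set ℕ → ℕ} (hm : ∀ i, X i ∈ idealOf 𝒜 → ∃ A ∈ infinitelyMeeting 𝒜 (X i), i < m A)
    {G : Set (Set ℕ)} (hG𝒜 : G ⊆ 𝒜) (hG : G.Finite) {i : ℕ} (hGi : ∀ B ∈ G, m B ≤ i) :
    (X i \ ⋃₀ G).Nonempty := by
  rw [nonempty_iff_ne_empty]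
  intro hXG
  have hXG' : (X i \ ⋃₀ G).Finite := by simp [hXG]
  obtain ⟨A, hA, hiA⟩ := hm i ⟨G, hG𝒜, hG, hXG'⟩
  exact (hGi A (infinitelyMeeting_subset h𝒜 hG𝒜 hG hXG' hA)).not_gt hiA

end Rank

theorem exists_pseudoIntersection_of_lt_pNumber {F : Set (Set ℕ)}
    (hF : Cardinal.mk F < pNumber)
    (hsfip : ∀ G ⊆ F, G.Finite → G.Nonempty → (⋂₀ G).Infinite) :
    ∃ Z : Set ℕ, Z.Infinite ∧ ∀ A ∈ F, (Z \ A).Finite := by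
  by_contra h
  exact hF.not_ge (csInf_le' ⟨F, rfl, hsfip, h⟩)

theorem exists_pseudoIntersection_of_mk_lt_pNumber {α ι : Type} [Denumerable α] (S : ι → Set α)
    (hι : Cardinal.mk ι < pNumber) (hS : ∀ t : Finset ι, (⋂ i ∈ t, S i).Infinite) :
    ∃ Z : Set α, Z.Infinite ∧ ∀ i, (Z \ S i).Finite := by
  let e := Denumerable.eqv α
  have hsfip : ∀ G ⊆ range fun i => e '' S i, G.Finite → G.Nonempty → (⋂₀ G).Infinite := by
    rintro G hGS hG -
    classical
    obtain ⟨G, rfl⟩ := hG.exists_finset_coe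
    obtain ⟨t, -, rfl⟩ := Finset.subset_set_image_iff.1 (image_univ (f := fun i => e '' S i) ▸ hGS)
    refine ((hS t).image e.injective.injOn).mono ?_
    rintro _ ⟨x, hx, rfl⟩
    simp only [Finset.coe_image, sInter_image, mem_iInter₂] at hx ⊢
    exact fun i hi => mem_image_of_mem e (hx i hi)
  obtain ⟨Z, hZ, hZS⟩ :=
    exists_pseudoIntersection_of_lt_pNumber (Cardinal.mk_range_le.trans_lt hι) hsfip
  refine ⟨e ⁻¹' Z, hZ.preimage (by simp), fun i => ?_⟩
  have := (hZS _ ⟨i, rfl⟩).preimage e.injective.injOn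
  rwa [preimage_sdiff, e.preimage_image] at this

/-- A pseudo-intersection of these sets plays the role of a generic filter for the σ-centred
forcing with finite selectors of `X`; the rank `m` is what makes the family centred. -/
def approxSet (X : ℕ → Set ℕ) (m : Set ℕ → ℕ) (A : Set ℕ) (k : ℕ) : Set (List ℕ) :=
  {l | k ≤ l.length ∧ ∀ i x, l[i]? = some x → x ∈ X i ∧ (m A ≤ i → x ∉ A)}

section Approximation

variable {X : ℕ → Set ℕ} {m : Set ℕ → ℕ}

lemma map_range_mem_approxSet {A : Set ℕ} {c : ℕ → ℕ}
    (hc : ∀ i, c i ∈ X i ∧ (m A ≤ i → c i ∉ A)) {k n : ℕ} (hkn : k ≤ n) :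
    (List.range n).map c ∈ approxSet X m A k := by
  refine ⟨by simpa using hkn, fun i x hx => ?_⟩
  obtain rfl : c i = x := by grind
  exact hc i

lemma iInter_approxSet_infinite {𝒜 : Set (Set ℕ)}
    (h : ∀ G ⊆ 𝒜, G.Finite → ∀ i, (X i \ ⋃₀ {B ∈ G | m B ≤ i}).Nonempty)
    (t : Finset (↥𝒜 × ℕ)) : (⋂ p ∈ t, approxSet X m p.1 p.2).Infinite := by
  choose c hc using h ((fun p : ↥𝒜 × ℕ => (p.1 : Set ℕ)) '' t)
    (by rintro _ ⟨p, -, rfl⟩; exact p.1.2) (t.finite_toSet.image _)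
  refine infinite_of_injective_forall_mem (f := fun n => (List.range (n + t.sup Prod.snd)).map c)
    (fun a b hab => by simpa using congrArg List.length hab) fun n => mem_iInter₂.2 fun p hp => ?_
  refine map_range_mem_approxSet (fun i => ⟨(hc i).1, fun hi hcA => (hc i).2 ?_⟩)
    ((Finset.le_sup hp).trans (Nat.le_add_left _ _))
  exact ⟨p.1, ⟨⟨p, hp, rfl⟩, hi⟩, hcA⟩

theorem exists_selector_of_pseudoIntersection {𝒜 : Set (Set ℕ)} {A₀ : Set ℕ} (hA₀ : A₀ ∈ 𝒜)
    {Y : Set (List ℕ)} (hY : Y.Infinite) (hYA : ∀ A ∈ 𝒜, ∀ k, (Y \ approxSet X m A k).Finite) :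
    ∃ b : ℕ → ℕ, (∀ i, b i ∈ X i) ∧ ∀ A ∈ 𝒜, {i | b i ∈ A}.Finite := by
  have hlong : ∀ i, ∃ l ∈ Y ∩ approxSet X m A₀ (i + 1), ∃ x, l[i]? = some x := by
    intro i
    obtain ⟨l, hlY, hl⟩ := (hY.sdiff (hYA A₀ hA₀ (i + 1))).nonempty
    have hlA : l ∈ approxSet X m A₀ (i + 1) := not_not.1 fun h => hl ⟨hlY, h⟩
    exact ⟨l, ⟨hlY, hlA⟩, _, List.getElem?_eq_getElem hlA.1⟩
  choose c hc b hb using hlong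
  refine ⟨b, fun i => ((hc i).2.2 i (b i) (hb i)).1, fun A hA => ?_⟩
  -- an index `i ≥ m A` with `b i ∈ A` comes from one of the finitely many bad lists
  refine ((finite_Iio (m A)).union ((hYA A hA 0).biUnion fun l _ => finite_Iio l.length)).subset ?_
  intro i hi
  by_cases hiA : i < m A
  · exact Or.inl hiA
  · refine Or.inr (mem_biUnion (x := c i) ⟨(hc i).1, fun hcA => ?_⟩ (hc i).2.1)
    exact (hcA.2 i (b i) (hb i)).2 (not_lt.1 hiA) hi

end Approximation

/-- If `𝒜` is an AD family of size `< 𝔭` and `(X n)` are infinite sets such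
that for every `A ∈ I(𝒜)` only finitely many `X n` are almost contained in
`A`, then there is `B` almost disjoint from every member of `𝒜` meeting every
`X n`. -/
theorem small_ad_stronglyTight_lemma (𝒜 : Set (Set ℕ))
    (had : IsADFamily 𝒜) (hcard : Cardinal.mk ↥𝒜 < pNumber)
    (X : ℕ → Set ℕ) (hXinf : ∀ n, (X n).Infinite)
    (hfin : ∀ A ∈ idealOf 𝒜, {n : ℕ | (X n \ A).Finite}.Finite) :
    ∃ B : Set ℕ, (∀ A ∈ 𝒜, (B ∩ A).Finite) ∧
      ∀ n, (B ∩ X n).Nonempty := by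
  have h𝒜 : 𝒜.Pairwise fun A B => (A ∩ B).Finite := had.2.2
  obtain ⟨m, hm⟩ := exists_rank h𝒜 hXinf hfin
  have hcard' : Cardinal.mk (↥𝒜 × ℕ) < pNumber := by
    rwa [Cardinal.mk_prod, Cardinal.lift_id, Cardinal.lift_id, Cardinal.mk_nat,
      Cardinal.mul_aleph0_eq (Cardinal.infinite_iff.1 had.1.to_subtype)]
  obtain ⟨Y, hY, hYS⟩ := exists_pseudoIntersection_of_mk_lt_pNumber
    (fun p : ↥𝒜 × ℕ => approxSet X m p.1 p.2) hcard' <| iInter_approxSet_infinite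
      fun G hG𝒜 hG i => diff_sUnion_nonempty_of_rank h𝒜 hm ((sep_subset _ _).trans hG𝒜)
        (hG.sep _) fun _ hB => hB.2
  obtain ⟨A₀, hA₀⟩ := had.1.nonempty
  obtain ⟨b, hbX, hbA⟩ :=
    exists_selector_of_pseudoIntersection hA₀ hY fun A hA k => hYS (⟨A, hA⟩, k)
  refine ⟨range b, fun A hA => ((hbA A hA).image b).subset ?_, fun n => ⟨b n, ⟨n, rfl⟩, hbX n⟩⟩
  rintro _ ⟨⟨i, rfl⟩, hi⟩
  exact mem_image_of_mem b hi
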